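/- arXiv:2001.03191 — 2 statements merged into one kernel-verified Lean document; each statement's English description precedes it below -/
import Mathlib

section
/- For every natural number m ≥ 1 and every real x with −1/2 < x < 1/2, one has P_m(x) < P_{m+1}(x). -/
/-!
`P (m + 1) x - P m x = t (m + 1) π^(2m+2) (1/4 - x²)^(m+1)`, so it suffices that `t j > 0` for
`j ≥ 1`. Consecutive terms of the series `t j` satisfy `a j (k + 1) = -r * a j k` with
`r = π² / (8 (2j+2k+1)(k+1)) ≤ 1/2` once `j + k ≥ 1`, so the series converges, alternates in
sign starting with a positive term, and each pair `a j (2n) + a j (2n+1)` is positive.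
(For `j = 0` the first ratio exceeds `1`, and indeed `t 0 = cos (π/2) = 0`.)
-/

open Real

/-- The summand `a_{j,k} = (-π²/4)^k / (2j+2k)! · C(j+k, j)`. -/
noncomputable def a (j k : ℕ) : ℝ :=
  (-(π ^ 2) / 4) ^ k / (Nat.factorial (2 * j + 2 * k)) * (Nat.choose (j + k) j)

/-- `t_j = Σ_{k=0}^∞ a_{j,k}`. -/
noncomputable def t (j : ℕ) : ℝ := ∑' k : ℕ, a j k

/-- `P_m(x) = Σ_{j=1}^m t_j π^{2j} (1/4 − x²)^j`. -/
noncomputable def P (m : ℕ) (x : ℝ) : ℝ :=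
  ∑ j ∈ Finset.Icc 1 m, t j * π ^ (2 * j) * (1 / 4 - x ^ 2) ^ j

lemma a_succ (j k : ℕ) :
    a j (k + 1) = -(π ^ 2 / (8 * (2 * j + 2 * k + 1) * (k + 1))) * a j k := by
  have hchoose : (Nat.choose (j + k + 1) j : ℝ) * (k + 1) = (j + k + 1) * Nat.choose (j + k) j := by
    have h := Nat.choose_mul_succ_eq (j + k) j
    rw [show j + k + 1 - j = k + 1 by omega] at h
    have h' := congrArg (Nat.cast : ℕ → ℝ) h
    push_cast at h'
    linarith
  have hfact : ((2 * j + 2 * (k + 1)).factorial : ℝ)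
      = (2 * j + 2 * k + 2) * (2 * j + 2 * k + 1) * (2 * j + 2 * k).factorial := by
    rw [show 2 * j + 2 * (k + 1) = 2 * j + 2 * k + 1 + 1 by ring, Nat.factorial_succ,
      Nat.factorial_succ]
    push_cast
    ring
  unfold a
  rw [hfact, show j + (k + 1) = j + k + 1 by ring, eq_div_of_mul_eq (by positivity) hchoose]
  field_simp
  ring

lemma pi_sq_div_le_half {j k : ℕ} (h : 1 ≤ j + k) :
    π ^ 2 / (8 * (2 * j + 2 * k + 1) * (k + 1)) ≤ 1 / 2 := by
  have hjk : (1 : ℝ) ≤ j + k := by exact_mod_cast h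
  have hden : (24 : ℝ) ≤ 8 * (2 * j + 2 * k + 1) * (k + 1) := by
    have hk : (0 : ℝ) ≤ k := k.cast_nonneg
    nlinarith
  rw [div_le_iff₀ (by linarith)]
  nlinarith [pi_lt_d2, pi_pos]

lemma norm_a_succ_le {j k : ℕ} (h : 1 ≤ j + k) : ‖a j (k + 1)‖ ≤ 1 / 2 * ‖a j k‖ := by
  rw [a_succ, norm_mul, norm_neg, norm_of_nonneg (by positivity)]
  exact mul_le_mul_of_nonneg_right (pi_sq_div_le_half h) (norm_nonneg _)

lemma summable_a (j : ℕ) : Summable (a j) :=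
  summable_of_ratio_norm_eventually_le (by norm_num) <|
    (Filter.eventually_ge_atTop 1).mono fun _ hk => norm_a_succ_le (by omega)

lemma a_even_pos (j n : ℕ) : 0 < a j (2 * n) := by
  unfold a
  have hpow : 0 < (-(π ^ 2) / 4) ^ (2 * n) := (even_two_mul n).pow_pos (by simp [pi_ne_zero])
  have hchoose : (0 : ℝ) < Nat.choose (j + 2 * n) j := by
    exact_mod_cast Nat.choose_pos (Nat.le_add_right j _)
  positivity

lemma a_even_add_odd_pos {j : ℕ} (hj : 1 ≤ j) (n : ℕ) : 0 < a j (2 * n) + a j (2 * n + 1) := by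
  have hr := pi_sq_div_le_half (j := j) (k := 2 * n) (by omega)
  have ha := a_even_pos j n
  rw [a_succ]
  nlinarith [mul_le_mul_of_nonneg_right hr ha.le]

lemma t_pos {j : ℕ} (hj : 1 ≤ j) : 0 < t j := by
  have heven : Summable fun n => a j (2 * n) :=
    (summable_a j).comp_injective fun _ _ h => by omega
  have hodd : Summable fun n => a j (2 * n + 1) :=
    (summable_a j).comp_injective fun _ _ h => by omega
  rw [t, ← tsum_even_add_odd heven hodd, ← heven.tsum_add hodd]
  exact (heven.add hodd).tsum_pos (fun n => (a_even_add_odd_pos hj n).le) 0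
    (a_even_add_odd_pos hj 0)

lemma P_succ (m : ℕ) (x : ℝ) :
    P (m + 1) x = P m x + t (m + 1) * π ^ (2 * (m + 1)) * (1 / 4 - x ^ 2) ^ (m + 1) :=
  Finset.sum_Icc_succ_top (by omega) _

theorem P_lt_P_succ_general (m : ℕ) (x : ℝ) (hx1 : -(1 / 2) < x) (hx2 : x < 1 / 2) :
    P m x < P (m + 1) x := by
  have hx : 0 < 1 / 4 - x ^ 2 := by nlinarith
  have hnew : 0 < t (m + 1) * π ^ (2 * (m + 1)) * (1 / 4 - x ^ 2) ^ (m + 1) :=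
    mul_pos (mul_pos (t_pos (by omega)) (pow_pos pi_pos _)) (pow_pos hx _)
  rw [P_succ]
  exact lt_add_of_pos_right _ hnew

/-- For `m ≥ 1` and `−1/2 < x < 1/2`, `P_m(x) < P_{m+1}(x)`. -/
theorem P_lt_P_succ (m : ℕ) (hm : 1 ≤ m) (x : ℝ) (hx1 : -(1 / 2) < x) (hx2 : x < 1 / 2) :
    P m x < P (m + 1) x :=
  P_lt_P_succ_general m x hx1 hx2
end

section
/- Define δ_m(x) := cos(πx) − P_m(x) and δ_m*(x) := π^{2m+2}(1/4 − x²)^{m+1}/(2m+2)!. Then δ_m(x) ∼ δ_m*(x) as m → ∞, uniformly in x ∈ (−1/2, 1/2): for every ε > 0 there is an M such that for all natural m ≥ M and all real x with −1/2 < x < 1/2, |δ_m(x) − δ_m*(x)| ≤ ε · δ_m*(x). -/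
/-!
Put `B = π²(1/4 − x²) = π²/4 − (πx)²`. Expanding `(B − π²/4)ⁿ` binomially in the cosine
series `cos(πx) = Σₙ (B − π²/4)ⁿ/(2n)!` and regrouping the absolutely convergent double series
by powers of `B` gives `cos(πx) = Σⱼ tⱼ Bʲ`; at `x = 1/2` this reads `t₀ = cos(π/2) = 0`.
Hence `δ_m` is the tail `Σ_{j>m} tⱼ Bʲ`, while `δ*_m = B^{m+1}/(2m+2)!`.

The inequality `C(j+k, k) (2j)! (2j+1)ᵏ ≤ (2j+2k)!` gives `|a_{j,k}| ≤ qⱼᵏ/(2j)!` with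
`qⱼ = π²/(4(2j+1))`, so `tⱼ = (1 + O(qⱼ))/(2j)!`. The first tail term is therefore
`δ*_m (1 + O(1/m))`, and the remaining ones add up to `O(δ*_m/m²)` by comparison with a geometric
series.
-/

open Real

open Filter Topology Finset
open scoped Nat

theorem Nat.choose_mul_factorial_mul_pow_le_factorial (j k : ℕ) :
    (j + k).choose k * (2 * j)! * (2 * j + 1) ^ k ≤ (2 * j + 2 * k)! := by
  induction k with
  | zero => simp
  | succ k ih =>
    have hchoose : (j + (k + 1)).choose (k + 1) ≤ (j + k + 1) * (j + k).choose k :=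
      (Nat.le_mul_of_pos_right _ k.succ_pos).trans_eq (Nat.add_one_mul_choose_eq _ _).symm
    have hfact : (2 * j + 2 * (k + 1))! =
        (2 * j + 2 * k + 2) * (2 * j + 2 * k + 1) * (2 * j + 2 * k)! := by
      rw [show 2 * j + 2 * (k + 1) = 2 * j + 2 * k + 1 + 1 by ring, Nat.factorial_succ,
        Nat.factorial_succ]
      ring
    calc (j + (k + 1)).choose (k + 1) * (2 * j)! * (2 * j + 1) ^ (k + 1)
        ≤ (j + k + 1) * (j + k).choose k * (2 * j)! * ((2 * j + 1) ^ k * (2 * j + 1)) := by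
          rw [pow_succ]; gcongr
      _ = ((j + k + 1) * (2 * j + 1)) * ((j + k).choose k * (2 * j)! * (2 * j + 1) ^ k) := by ring
      _ ≤ ((2 * j + 2 * k + 2) * (2 * j + 2 * k + 1)) * (2 * j + 2 * k)! := by gcongr <;> omega
      _ = (2 * j + 2 * (k + 1))! := hfact.symm

theorem sum_antidiagonal_pow_div_factorial (B c : ℝ) (n : ℕ) :
    ∑ p ∈ antidiagonal n, c ^ p.2 / (2 * p.1 + 2 * p.2)! * ((p.1 + p.2).choose p.1 : ℝ) *
      B ^ p.1 = (B + c) ^ n / (2 * n)! := by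
  rw [(Commute.all B c).add_pow', sum_div]
  refine sum_congr rfl fun p hp => ?_
  rw [HasAntidiagonal.mem_antidiagonal] at hp
  rw [← mul_add, hp, nsmul_eq_mul]
  ring

theorem Real.summable_pow_div_factorial_two_mul (y : ℝ) :
    Summable fun n : ℕ => y ^ n / (2 * n)! := by
  refine (Real.summable_pow_div_factorial |y|).of_norm_bounded fun n => ?_
  rw [norm_div, norm_pow, Real.norm_eq_abs, RCLike.norm_natCast]
  gcongr
  omega

theorem hasSum_of_summable_sum_antidiagonal_abs {A : Type*} [AddCommMonoid A] [HasAntidiagonal A]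
    {f : A × A → ℝ} {s : ℝ} (habs : Summable fun n => ∑ p ∈ antidiagonal n, |f p|)
    (hf : HasSum (fun n => ∑ p ∈ antidiagonal n, f p) s) : HasSum f s := by
  have hsummable : Summable f := by
    rw [← summable_abs_iff, ← HasAntidiagonal.sigmaAntidiagonalEquivProd.summable_iff]
    refine (summable_sigma_of_nonneg fun _ => abs_nonneg _).mpr
      ⟨fun _ => Summable.of_finite, habs.congr fun n => (Finset.tsum_subtype _ _).symm⟩
  rw [← HasAntidiagonal.sigmaAntidiagonalEquivProd.hasSum_iff]
  exact hf.sigma_of_hasSum (fun n => Finset.hasSum _ _)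
    (HasAntidiagonal.sigmaAntidiagonalEquivProd.summable_iff.mpr hsummable)

theorem abs_a (j k : ℕ) : |a j k| = (π ^ 2 / 4) ^ k / (2 * j + 2 * k)! * (j + k).choose j := by
  rw [a, abs_mul, abs_div, abs_pow, abs_div, abs_neg,
    abs_of_nonneg (by positivity : (0 : ℝ) ≤ π ^ 2)]
  simp

theorem hasSum_t_mul_pow (s : ℝ) : HasSum (fun j => t j * (π ^ 2 / 4 - s ^ 2) ^ j) (cos s) := by
  set B := π ^ 2 / 4 - s ^ 2
  have hcos : HasSum (fun n => ∑ p ∈ antidiagonal n, a p.1 p.2 * B ^ p.1) (cos s) := by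
    convert Real.hasSum_cos s using 2 with n
    simp only [a]
    rw [sum_antidiagonal_pow_div_factorial, show B + -π ^ 2 / 4 = -1 * s ^ 2 by ring, mul_pow,
      ← pow_mul]
  have habs : Summable fun n => ∑ p ∈ antidiagonal n, |a p.1 p.2 * B ^ p.1| := by
    convert Real.summable_pow_div_factorial_two_mul (|B| + π ^ 2 / 4) using 2 with n
    simp only [abs_mul, abs_a, abs_pow]
    exact sum_antidiagonal_pow_div_factorial _ _ n
  have hprod := hasSum_of_summable_sum_antidiagonal_abs habs hcos
  refine hprod.prod_fiberwise fun j => ?_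
  simpa only [t, tsum_mul_right] using (hprod.summable.prod_factor j).hasSum

theorem t_zero : t 0 = 0 := by
  have h := hasSum_t_mul_pow (π / 2)
  rw [show π ^ 2 / 4 - (π / 2) ^ 2 = 0 by ring, cos_pi_div_two] at h
  simpa using (hasSum_single 0 fun j hj => by simp [hj]).unique h

noncomputable def tRatio (j : ℕ) : ℝ := π ^ 2 / (4 * (2 * j + 1))

theorem tRatio_nonneg (j : ℕ) : 0 ≤ tRatio j := by unfold tRatio; positivity

theorem tRatio_le_five_sixths {j : ℕ} (hj : 1 ≤ j) : tRatio j ≤ 5 / 6 := by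
  have hj' : (1 : ℝ) ≤ j := by exact_mod_cast hj
  rw [tRatio, div_le_iff₀ (by positivity)]
  nlinarith [pi_pos, pi_lt_d2]

theorem tendsto_tRatio_atTop : Tendsto tRatio atTop (𝓝 0) :=
  tendsto_const_nhds.div_atTop <| tendsto_atTop_mono (fun j => by linarith)
    tendsto_natCast_atTop_atTop

theorem abs_a_le (j k : ℕ) : |a j k| ≤ tRatio j ^ k / (2 * j)! := by
  have hkey : ((j + k).choose j : ℝ) * (2 * j)! * (2 * j + 1) ^ k ≤ (2 * j + 2 * k)! := by
    rw [Nat.choose_symm_add]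
    exact_mod_cast Nat.choose_mul_factorial_mul_pow_le_factorial j k
  have hratio : tRatio j ^ k / (2 * j)! = (π ^ 2 / 4) ^ k / ((2 * j)! * (2 * j + 1) ^ k) := by
    rw [tRatio, div_pow, div_pow, mul_pow]
    ring
  rw [abs_a, hratio, div_mul_eq_mul_div, div_le_div_iff₀ (by positivity) (by positivity)]
  calc (π ^ 2 / 4) ^ k * ((j + k).choose j) * ((2 * j)! * (2 * j + 1) ^ k)
      = (π ^ 2 / 4) ^ k * (((j + k).choose j : ℝ) * (2 * j)! * (2 * j + 1) ^ k) := by ring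
    _ ≤ (π ^ 2 / 4) ^ k * (2 * j + 2 * k)! := by gcongr
    _ = _ := by ring

theorem abs_t_sub_inv_factorial_le {j : ℕ} (hj : 1 ≤ j) :
    |t j - 1 / (2 * j)!| ≤ tRatio j / (1 - tRatio j) / (2 * j)! := by
  set q := tRatio j
  have hq1 : q < 1 := (tRatio_le_five_sixths hj).trans_lt (by norm_num)
  have hbound : ∀ k, ‖a j (k + 1)‖ ≤ q * q ^ k / (2 * j)! := fun k =>
    (abs_a_le j (k + 1)).trans_eq (by rw [pow_succ'])
  have hgeom := ((hasSum_geometric_of_lt_one (tRatio_nonneg j) hq1).mul_left q).div_const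
    ((2 * j)! : ℝ)
  have hsummable : Summable (a j) :=
    (summable_nat_add_iff 1).mp (hgeom.summable.of_norm_bounded hbound)
  rw [t, hsummable.tsum_eq_zero_add, show a j 0 = 1 / (2 * j)! by simp [a], add_sub_cancel_left]
  exact tsum_of_norm_bounded hgeom hbound

theorem abs_t_le {j : ℕ} (hj : 1 ≤ j) : |t j| ≤ 6 / (2 * j)! := by
  have hq := tRatio_le_five_sixths hj
  have hgeom := (hasSum_geometric_of_lt_one (tRatio_nonneg j) (hq.trans_lt (by norm_num))).div_const
    ((2 * j)! : ℝ)
  refine (tsum_of_norm_bounded (f := a j) hgeom (abs_a_le j)).trans ?_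
  gcongr
  rw [inv_le_comm₀ (by linarith) (by norm_num)]
  linarith

theorem pow_div_factorial_two_mul_add_le {B : ℝ} (hB : 0 ≤ B) (j n : ℕ) :
    B ^ (n + j) / (2 * (n + j))! ≤ B ^ j / (2 * j)! * (B / (2 * j + 1) ^ 2) ^ n := by
  have hfact : ((2 * j)! : ℝ) * (2 * j + 1) ^ (2 * n) ≤ (2 * (n + j))! := by
    rw [show 2 * (n + j) = 2 * j + 2 * n by ring]
    exact_mod_cast Nat.factorial_mul_pow_le_factorial
  calc B ^ (n + j) / (2 * (n + j))! ≤ B ^ (n + j) / ((2 * j)! * (2 * j + 1) ^ (2 * n)) := by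
        gcongr
    _ = B ^ j / (2 * j)! * (B / (2 * j + 1) ^ 2) ^ n := by
        rw [pow_add, div_pow, ← pow_mul]
        ring

theorem abs_tsum_t_mul_pow_sub_le {B : ℝ} (hB₀ : 0 ≤ B) (hB : B ≤ π ^ 2 / 4) {j : ℕ}
    (hj : 1 ≤ j) :
    |∑' n, t (n + j) * B ^ (n + j) - B ^ j / (2 * j)!| ≤
      7 * tRatio j / (1 - tRatio j) * (B ^ j / (2 * j)!) := by
  set D := B ^ j / (2 * j)!
  set q := tRatio j
  set r := B / (2 * j + 1) ^ 2
  have hq1 : q < 1 := (tRatio_le_five_sixths hj).trans_lt (by norm_num)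
  have hr₀ : 0 ≤ r := by positivity
  have hrq : r ≤ q := by
    have hj' : (1 : ℝ) ≤ 2 * j + 1 := by linarith [j.cast_nonneg (α := ℝ)]
    calc r ≤ π ^ 2 / 4 / (2 * j + 1) ^ 2 := div_le_div_of_nonneg_right hB (by positivity)
      _ ≤ π ^ 2 / 4 / (2 * j + 1) := div_le_div_of_nonneg_left (by positivity) (by positivity)
          (by nlinarith)
      _ = q := div_div _ _ _
  have hr1 : r < 1 := hrq.trans_lt hq1
  have hhead : |t j * B ^ j - D| ≤ q / (1 - q) * D := by
    rw [show t j * B ^ j - D = (t j - 1 / (2 * j)!) * B ^ j by ring, abs_mul,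
      abs_of_nonneg (by positivity : 0 ≤ B ^ j)]
    calc |t j - 1 / (2 * j)!| * B ^ j ≤ q / (1 - q) / (2 * j)! * B ^ j := by
          gcongr; exact abs_t_sub_inv_factorial_le hj
      _ = q / (1 - q) * D := by ring
  have htail : ∀ n, ‖t (n + 1 + j) * B ^ (n + 1 + j)‖ ≤ 6 * D * r * r ^ n := fun n => by
    rw [Real.norm_eq_abs, abs_mul, abs_of_nonneg (by positivity : 0 ≤ B ^ (n + 1 + j))]
    calc |t (n + 1 + j)| * B ^ (n + 1 + j) ≤ 6 / (2 * (n + 1 + j))! * B ^ (n + 1 + j) := by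
          gcongr; exact abs_t_le (by omega)
      _ = 6 * (B ^ (n + 1 + j) / (2 * (n + 1 + j))!) := by ring
      _ ≤ 6 * (D * r ^ (n + 1)) := by gcongr; exact pow_div_factorial_two_mul_add_le hB₀ j _
      _ = 6 * D * r * r ^ n := by ring
  have hgeom := (hasSum_geometric_of_lt_one hr₀ hr1).mul_left (6 * D * r)
  have hsummable : Summable fun n => t (n + j) * B ^ (n + j) :=
    (summable_nat_add_iff 1).mp (hgeom.summable.of_norm_bounded htail)
  have hratio : r / (1 - r) ≤ q / (1 - q) := by gcongr; linarith
  rw [hsummable.tsum_eq_zero_add, zero_add, add_sub_right_comm]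
  calc |t j * B ^ j - D + ∑' n, t (n + 1 + j) * B ^ (n + 1 + j)|
      ≤ q / (1 - q) * D + 6 * D * r * (1 - r)⁻¹ :=
        (abs_add_le _ _).trans (add_le_add hhead (tsum_of_norm_bounded hgeom htail))
    _ = q / (1 - q) * D + 6 * (r / (1 - r)) * D := by ring
    _ ≤ q / (1 - q) * D + 6 * (q / (1 - q)) * D := by gcongr
    _ = 7 * q / (1 - q) * D := by ring

theorem pi_pow_mul_pow_eq (x : ℝ) (j : ℕ) :
    π ^ (2 * j) * (1 / 4 - x ^ 2) ^ j = (π ^ 2 / 4 - (π * x) ^ 2) ^ j := by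
  rw [pow_mul, ← mul_pow]
  ring

theorem cos_sub_P_eq_tsum (m : ℕ) (x : ℝ) :
    cos (π * x) - P m x =
      ∑' n, t (n + (m + 1)) * (π ^ 2 / 4 - (π * x) ^ 2) ^ (n + (m + 1)) := by
  have hP : P m x = ∑ j ∈ range (m + 1), t j * (π ^ 2 / 4 - (π * x) ^ 2) ^ j := by
    rw [range_eq_Ico, sum_eq_sum_Ico_succ_bot (by omega : 0 < m + 1), t_zero, zero_mul,
      zero_add, Ico_add_one_right_eq_Icc, P]
    simp only [mul_assoc, pi_pow_mul_pow_eq]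
  have hcos := hasSum_t_mul_pow (π * x)
  rw [hP, ← hcos.tsum_eq, ← hcos.summable.sum_add_tsum_nat_add (m + 1), add_sub_cancel_left]

/-- `δ_m(x) := cos(πx) − P_m(x)` is asymptotic to
`δ_m*(x) := π^{2m+2}(1/4−x²)^{m+1}/(2m+2)!` as `m → ∞`, uniformly in `x ∈ (−1/2, 1/2)`. -/
theorem delta_asymp_uniform :
    ∀ ε > (0 : ℝ), ∃ M : ℕ, ∀ m : ℕ, M ≤ m → ∀ x : ℝ, -(1 / 2) < x → x < 1 / 2 →
      |(Real.cos (π * x) - P m x) -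
          π ^ (2 * m + 2) * (1 / 4 - x ^ 2) ^ (m + 1) / (Nat.factorial (2 * m + 2))| ≤
        ε * (π ^ (2 * m + 2) * (1 / 4 - x ^ 2) ^ (m + 1) / (Nat.factorial (2 * m + 2))) := by
  intro ε hε
  have hq := tendsto_tRatio_atTop.comp (tendsto_add_atTop_nat 1)
  have herr : Tendsto (fun m => 7 * tRatio (m + 1) / (1 - tRatio (m + 1))) atTop (𝓝 0) := by
    simpa [Pi.div_def] using (hq.const_mul 7).div (hq.const_sub 1) (by norm_num)
  obtain ⟨M, hM⟩ := eventually_atTop.mp (herr.eventually (ge_mem_nhds hε))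
  refine ⟨M, fun m hm x hx₁ hx₂ => ?_⟩
  have hx : x ^ 2 ≤ 1 / 4 := by nlinarith
  have hB₀ : 0 ≤ π ^ 2 / 4 - (π * x) ^ 2 := by
    nlinarith [mul_nonneg (sq_nonneg π) (sub_nonneg.mpr hx)]
  have hB : π ^ 2 / 4 - (π * x) ^ 2 ≤ π ^ 2 / 4 := by nlinarith [sq_nonneg (π * x)]
  rw [cos_sub_P_eq_tsum, ← mul_add_one, pi_pow_mul_pow_eq]
  exact (abs_tsum_t_mul_pow_sub_le hB₀ hB m.succ_pos).trans
    (mul_le_mul_of_nonneg_right (hM m hm) (by positivity))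
end
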